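/- arXiv:1802.01547 — 2 statements merged into one kernel-verified Lean document; each statement's English description precedes it below -/
import Mathlib

section
/- Sector bound for the classical Mehler (Hermite) kernel: for z ∈ ℂ with Re z > 0 and x, y ∈ ℝ^d define 𝓗_z^0(x,y) = (2π sinh(2z))^{-d/2} exp(-(1/4)(coth(z)|x-y|² + tanh(z)|x+y|²)), using the principal branch of the complex power. Then for every ω ∈ (0, π/2) there exists a constant c ∈ (0,1] such that for all z with Re z > 0 and 0 ≤ arg z ≤ ω and all x, y ∈ ℝ^d: |𝓗_z^0(x,y)| ≤ (2π sinh(2 Re z))^{-d/2} exp(-(c/4)(coth(Re z)|x-y|² + tanh(Re z)|x+y|²)). -/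
/-!
Write `z = a + ib`. The modulus of the kernel depends only on `|sinh 2z|` and the real parts of
`coth z` and `tanh z`. Since `|sinh z|² = sinh² a + sin² b` and `|cosh z|² = sinh² a + cos² b`,
one gets `|sinh 2z| ≥ sinh 2a`, `Re tanh z ≥ tanh a`, and
`Re coth z = sinh a cosh a / (sinh² a + sin² b)`. In the sector `0 ≤ b ≤ a tan ω` we have
`sin² b ≤ b² ≤ tan² ω sinh² a`, so `Re coth z ≥ cos² ω coth a`, and `c = cos² ω` works.
-/

open Real

noncomputable section

/-- The classical Mehler (Hermite) kernel `𝓗_z^0(x, y)`, with the principal branch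
of the complex power. -/
def mehlerKernel (d : ℕ) (z : ℂ) (x y : EuclideanSpace ℝ (Fin d)) : ℂ :=
  (2 * (Real.pi : ℂ) * Complex.sinh (2 * z)) ^ (-(d : ℂ) / 2) *
    Complex.exp (-(1 / 4 : ℂ) *
      ((Complex.cosh z / Complex.sinh z) * ((‖x - y‖ : ℝ) : ℂ) ^ 2
        + (Complex.sinh z / Complex.cosh z) * ((‖x + y‖ : ℝ) : ℂ) ^ 2))

namespace Complex

lemma sinh_re (z : ℂ) : (sinh z).re = Real.sinh z.re * Real.cos z.im := by
  obtain ⟨a, b, rfl⟩ : ∃ a b : ℝ, z = a + b * I := ⟨z.re, z.im, (re_add_im z).symm⟩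
  simp [sinh_add, sinh_mul_I, cosh_mul_I, ← ofReal_sinh, ← ofReal_cosh, ← ofReal_sin, ← ofReal_cos]

lemma sinh_im (z : ℂ) : (sinh z).im = Real.cosh z.re * Real.sin z.im := by
  obtain ⟨a, b, rfl⟩ : ∃ a b : ℝ, z = a + b * I := ⟨z.re, z.im, (re_add_im z).symm⟩
  simp [sinh_add, sinh_mul_I, cosh_mul_I, ← ofReal_sinh, ← ofReal_cosh, ← ofReal_sin, ← ofReal_cos]

lemma cosh_re (z : ℂ) : (cosh z).re = Real.cosh z.re * Real.cos z.im := by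
  obtain ⟨a, b, rfl⟩ : ∃ a b : ℝ, z = a + b * I := ⟨z.re, z.im, (re_add_im z).symm⟩
  simp [cosh_add, sinh_mul_I, cosh_mul_I, ← ofReal_sinh, ← ofReal_cosh, ← ofReal_sin, ← ofReal_cos]

lemma cosh_im (z : ℂ) : (cosh z).im = Real.sinh z.re * Real.sin z.im := by
  obtain ⟨a, b, rfl⟩ : ∃ a b : ℝ, z = a + b * I := ⟨z.re, z.im, (re_add_im z).symm⟩
  simp [cosh_add, sinh_mul_I, cosh_mul_I, ← ofReal_sinh, ← ofReal_cosh, ← ofReal_sin, ← ofReal_cos]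

lemma normSq_sinh (z : ℂ) : normSq (sinh z) = Real.sinh z.re ^ 2 + Real.sin z.im ^ 2 := by
  rw [normSq_apply, sinh_re, sinh_im]
  linear_combination Real.sinh z.re ^ 2 * Real.sin_sq_add_cos_sq z.im
    + Real.sin z.im ^ 2 * Real.cosh_sq z.re

lemma normSq_cosh (z : ℂ) : normSq (cosh z) = Real.sinh z.re ^ 2 + Real.cos z.im ^ 2 := by
  rw [normSq_apply, cosh_re, cosh_im]
  linear_combination Real.sinh z.re ^ 2 * Real.sin_sq_add_cos_sq z.im
    + Real.cos z.im ^ 2 * Real.cosh_sq z.re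

lemma re_cosh_div_sinh (z : ℂ) :
    (cosh z / sinh z).re = Real.sinh z.re * Real.cosh z.re / normSq (sinh z) := by
  rw [div_re, ← add_div, sinh_re, sinh_im, cosh_re, cosh_im]
  congr 1
  linear_combination Real.sinh z.re * Real.cosh z.re * Real.sin_sq_add_cos_sq z.im

lemma re_sinh_div_cosh (z : ℂ) :
    (sinh z / cosh z).re = Real.sinh z.re * Real.cosh z.re / normSq (cosh z) := by
  rw [div_re, ← add_div, sinh_re, sinh_im, cosh_re, cosh_im]
  congr 1
  linear_combination Real.sinh z.re * Real.cosh z.re * Real.sin_sq_add_cos_sq z.im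

lemma abs_sinh_re_le_norm_sinh (z : ℂ) : |Real.sinh z.re| ≤ ‖sinh z‖ := by
  rw [← abs_norm, ← sq_le_sq, Complex.sq_norm, normSq_sinh]
  exact le_add_of_nonneg_right (sq_nonneg _)

lemma sinh_re_div_cosh_re_le_re_sinh_div_cosh {z : ℂ} (hz : 0 < z.re) :
    Real.sinh z.re / Real.cosh z.re ≤ (sinh z / cosh z).re := by
  have hsinh : 0 < Real.sinh z.re := Real.sinh_pos_iff.mpr hz
  have hcosh : 0 < Real.cosh z.re := Real.cosh_pos z.re
  calc Real.sinh z.re / Real.cosh z.re = Real.sinh z.re * Real.cosh z.re / Real.cosh z.re ^ 2 := by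
        field_simp
    _ ≤ Real.sinh z.re * Real.cosh z.re / normSq (cosh z) := by
        rw [normSq_cosh]
        refine div_le_div_of_nonneg_left (by positivity) (by positivity) ?_
        linarith [Real.cosh_sq z.re, Real.cos_sq_le_one z.im]
    _ = (sinh z / cosh z).re := (re_sinh_div_cosh z).symm

lemma inv_one_add_sq_mul_cosh_re_div_sinh_re_le {z : ℂ} {t : ℝ} (hz : 0 < z.re)
    (him : |z.im| ≤ t * z.re) :
    (1 + t ^ 2)⁻¹ * (Real.cosh z.re / Real.sinh z.re) ≤ (cosh z / sinh z).re := by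
  have hsinh : 0 < Real.sinh z.re := Real.sinh_pos_iff.mpr hz
  have ht : 0 ≤ t := nonneg_of_mul_nonneg_left ((abs_nonneg _).trans him) hz
  have hsin : Real.sin z.im ^ 2 ≤ t ^ 2 * Real.sinh z.re ^ 2 := by
    rw [← mul_pow]
    refine sq_le_sq.2 ?_
    calc |Real.sin z.im| ≤ |z.im| := Real.abs_sin_le_abs
      _ ≤ t * z.re := him
      _ ≤ t * Real.sinh z.re := by gcongr; exact Real.self_le_sinh_iff.mpr hz.le
      _ = |t * Real.sinh z.re| := (abs_of_nonneg (by positivity)).symm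
  calc (1 + t ^ 2)⁻¹ * (Real.cosh z.re / Real.sinh z.re)
      = Real.sinh z.re * Real.cosh z.re / ((1 + t ^ 2) * Real.sinh z.re ^ 2) := by
        field_simp
    _ ≤ Real.sinh z.re * Real.cosh z.re / normSq (sinh z) := by
        rw [normSq_sinh]
        refine div_le_div_of_nonneg_left (by positivity) (by positivity) ?_
        linarith
    _ = (cosh z / sinh z).re := (re_cosh_div_sinh z).symm

lemma abs_im_le_tan_mul_re {z : ℂ} {ω : ℝ} (hz : 0 < z.re) (harg : 0 ≤ z.arg)
    (hargω : z.arg ≤ ω) (hω : ω < π / 2) : |z.im| ≤ Real.tan ω * z.re := by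
  have hpi : -(π / 2) < z.arg := by linarith [Real.pi_pos]
  rw [abs_of_nonneg (arg_nonneg_iff.mp harg), ← div_le_iff₀ hz, ← tan_arg]
  exact Real.strictMonoOn_tan.monotoneOn ⟨hpi, hargω.trans_lt hω⟩ ⟨hpi.trans_le hargω, hω⟩ hargω

end Complex

open Complex in
lemma norm_mehlerKernel (d : ℕ) (z : ℂ) (x y : EuclideanSpace ℝ (Fin d)) :
    ‖mehlerKernel d z x y‖ = ‖2 * (π : ℂ) * sinh (2 * z)‖ ^ (-(d : ℝ) / 2) *
      Real.exp (-(1 / 4) * ((cosh z / sinh z).re * ‖x - y‖ ^ 2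
        + (sinh z / cosh z).re * ‖x + y‖ ^ 2)) := by
  have hexp : -(d : ℂ) / 2 = ((-(d : ℝ) / 2 : ℝ) : ℂ) := by push_cast; ring
  rw [mehlerKernel, norm_mul, hexp, norm_cpow_real, norm_exp]
  congr 2
  simp [← ofReal_pow]

theorem mehlerKernel_sector_bound_general (d : ℕ) (ω : ℝ) (hω0 : 0 < ω)
    (hω : ω < π / 2) :
    ∃ c : ℝ, 0 < c ∧ c ≤ 1 ∧
      ∀ z : ℂ, 0 < z.re → 0 ≤ z.arg → z.arg ≤ ω →
        ∀ x y : EuclideanSpace ℝ (Fin d),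
          ‖mehlerKernel d z x y‖
            ≤ (2 * Real.pi * Real.sinh (2 * z.re)) ^ (-(d : ℝ) / 2) *
              Real.exp (-(c / 4) *
                ((Real.cosh z.re / Real.sinh z.re) * ‖x - y‖ ^ 2
                  + (Real.sinh z.re / Real.cosh z.re) * ‖x + y‖ ^ 2)) := by
  have hcos : 0 < cos ω := cos_pos_of_mem_Ioo ⟨by linarith, hω⟩
  have hc : cos ω ^ 2 ≤ 1 := pow_le_one₀ hcos.le (cos_le_one ω)
  refine ⟨cos ω ^ 2, by positivity, hc, ?_⟩
  intro z hz harg hargω x y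
  have hsinh : 0 < Real.sinh (2 * z.re) := Real.sinh_pos_iff.mpr (by linarith)
  have hprefactor : 2 * π * Real.sinh (2 * z.re) ≤ ‖2 * (π : ℂ) * Complex.sinh (2 * z)‖ := by
    have h := Complex.abs_sinh_re_le_norm_sinh (2 * z)
    simp only [Complex.mul_re, Complex.re_ofNat, Complex.im_ofNat, zero_mul, sub_zero] at h
    rw [abs_of_pos hsinh] at h
    simpa [abs_of_pos pi_pos] using mul_le_mul_of_nonneg_left h (by positivity : (0 : ℝ) ≤ 2 * π)
  have hcoth := Complex.inv_one_add_sq_mul_cosh_re_div_sinh_re_le hz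
    (Complex.abs_im_le_tan_mul_re hz harg hargω hω)
  rw [inv_one_add_tan_sq hcos.ne'] at hcoth
  have htanh := Complex.sinh_re_div_cosh_re_le_re_sinh_div_cosh hz
  rw [norm_mehlerKernel]
  gcongr ?_ * exp ?_
  · exact rpow_le_rpow_of_nonpos (by positivity) hprefactor (by linarith [d.cast_nonneg (α := ℝ)])
  · have hsinh_re : 0 < Real.sinh z.re := Real.sinh_pos_iff.mpr hz
    have htanh_le :
        cos ω ^ 2 * (Real.sinh z.re / Real.cosh z.re) ≤ Real.sinh z.re / Real.cosh z.re :=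
      mul_le_of_le_one_left (by positivity) hc
    nlinarith [mul_le_mul_of_nonneg_right hcoth (sq_nonneg ‖x - y‖),
      mul_le_mul_of_nonneg_right (htanh_le.trans htanh) (sq_nonneg ‖x + y‖)]

/-- Sector bound for the classical Mehler (Hermite) kernel: for every
`ω ∈ (0, π/2)` there is a constant `c ∈ (0, 1]` such that for all `z` with `Re z > 0`
and `0 ≤ arg z ≤ ω` and all `x, y ∈ ℝ^d`,
`|𝓗_z^0(x,y)| ≤ (2π sinh(2 Re z))^{-d/2} exp(-(c/4)(coth(Re z)|x-y|² + tanh(Re z)|x+y|²))`. -/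
theorem mehlerKernel_sector_bound (d : ℕ) (hd : 1 ≤ d) (ω : ℝ) (hω0 : 0 < ω)
    (hω : ω < π / 2) :
    ∃ c : ℝ, 0 < c ∧ c ≤ 1 ∧
      ∀ z : ℂ, 0 < z.re → 0 ≤ z.arg → z.arg ≤ ω →
        ∀ x y : EuclideanSpace ℝ (Fin d),
          ‖mehlerKernel d z x y‖
            ≤ (2 * Real.pi * Real.sinh (2 * z.re)) ^ (-(d : ℝ) / 2) *
              Real.exp (-(c / 4) *
                ((Real.cosh z.re / Real.sinh z.re) * ‖x - y‖ ^ 2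
                  + (Real.sinh z.re / Real.cosh z.re) * ‖x + y‖ ^ 2)) :=
  mehlerKernel_sector_bound_general d ω hω0 hω
end
end

section
/- Let A be a finite set of nonzero vectors in ℝ^d and k : A → [0,∞). Then the weighted measure μ defined by dμ(x) = w(x) dx with w(x) = ∏_{α∈A} |⟨α, x⟩|^{2 k(α)} is a doubling measure: there exists a constant C > 0 such that for every x₀ ∈ ℝ^d and every r > 0, μ(B(x₀, 2r)) ≤ C · μ(B(x₀, r)). -/
/-!
On a ball `B(x₀, r)` each factor `|⟪α, x⟫|` of the weight has natural size
`s_α = |⟪α, x₀⟫| + ‖α‖ r`: it is at most `2 s_α` on the doubled ball, and it drops below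
`ε s_α` only on a slab of width `O(ε r)` around a hyperplane, whose volume is an `O(ε)`
fraction of the ball. For `ε` small (depending only on `A` and the dimension), removing these
slabs for all `α ∈ A` leaves half of the ball, on which the weight is at least
`∏ (ε/2)^{2k(α)}` times its bound on the doubled ball. Comparing the two integrals gives the doubling constant
`2^{d+1} ∏ (2/ε)^{2k(α)}`.
-/

open MeasureTheory Metric Set Module
open scoped ENNReal

theorem measure_le_two_mul_measure_diff {Ω : Type*} [MeasurableSpace Ω] {μ : Measure Ω}
    {s t : Set Ω} (hs : μ s ≠ ∞) (ht : 2 * μ t ≤ μ s) : μ s ≤ 2 * μ (s \ t) := by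
  have hsplit : μ s ≤ μ t + μ (s \ t) := tsub_le_iff_left.1 le_measure_sdiff
  refine ENNReal.le_of_add_le_add_left hs ?_
  calc μ s + μ s = 2 * μ s := (two_mul _).symm
    _ ≤ 2 * μ t + 2 * μ (s \ t) := by rw [← mul_add]; gcongr
    _ ≤ μ s + 2 * μ (s \ t) := by gcongr

section Doubling

variable {E : Type*} [NormedAddCommGroup E] [NormedSpace ℝ E] [FiniteDimensional ℝ E]
  [MeasurableSpace E] [BorelSpace E] (μ : Measure E) [μ.IsAddHaarMeasure]

theorem withDensity_ball_two_mul_le_of_le_of_le (w : E → ℝ≥0∞) {x₀ : E} {r : ℝ} {G : Set E}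
    (hG : MeasurableSet G) (hGr : G ⊆ ball x₀ r) (hGvol : μ (ball x₀ r) ≤ 2 * μ G)
    {K m : ℝ≥0∞} (hup : ∀ x ∈ ball x₀ (2 * r), w x ≤ K * m) (hlow : ∀ x ∈ G, m ≤ w x) :
    μ.withDensity w (ball x₀ (2 * r)) ≤
      2 ^ (finrank ℝ E + 1) * K * μ.withDensity w (ball x₀ r) := by
  rw [withDensity_apply _ measurableSet_ball, withDensity_apply _ measurableSet_ball]
  have hball : μ (ball x₀ (2 * r)) = 2 ^ finrank ℝ E * μ (ball x₀ r) := by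
    rw [μ.addHaar_ball_mul_of_pos x₀ two_pos, ← μ.addHaar_ball_center x₀,
      ENNReal.ofReal_pow zero_le_two, ENNReal.ofReal_ofNat]
  calc ∫⁻ x in ball x₀ (2 * r), w x ∂μ
      ≤ ∫⁻ _ in ball x₀ (2 * r), K * m ∂μ := setLIntegral_mono measurable_const hup
    _ = 2 ^ finrank ℝ E * K * (m * μ (ball x₀ r)) := by
      rw [setLIntegral_const, hball]; ring
    _ ≤ 2 ^ finrank ℝ E * K * (m * (2 * μ G)) := by gcongr
    _ = 2 ^ (finrank ℝ E + 1) * K * ∫⁻ _ in G, m ∂μ := by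
      rw [setLIntegral_const, pow_succ]; ring
    _ ≤ 2 ^ (finrank ℝ E + 1) * K * ∫⁻ x in ball x₀ r, w x ∂μ :=
      mul_le_mul_right ((setLIntegral_mono' hG hlow).trans (lintegral_mono_set hGr)) _

end Doubling

section Slab

variable {E : Type*} [NormedAddCommGroup E] [InnerProductSpace ℝ E] [FiniteDimensional ℝ E]

theorem exists_orthonormalBasis_apply_eq {ι : Type*} [Fintype ι]
    (hcard : finrank ℝ E = Fintype.card ι) (i₀ : ι) {u : E} (hu : ‖u‖ = 1) :
    ∃ b : OrthonormalBasis ι ℝ E, b i₀ = u := by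
  have hv : Orthonormal ℝ (({i₀} : Set ι).domRestrict fun _ => u) :=
    orthonormal_subsingleton_iff.2 fun _ => hu
  obtain ⟨b, hb⟩ := hv.exists_orthonormalBasis_extension_of_card_eq hcard
  exact ⟨b, hb i₀ rfl⟩

variable [MeasurableSpace E] [BorelSpace E]

/-- In coordinates of an orthonormal basis starting with `α / ‖α‖`, the slab lies in a box
with one side `2 δ / ‖α‖` and the others `2 r`. -/
theorem volume_ball_inter_abs_inner_lt_le {α : E} (hα : α ≠ 0) (x₀ : E) (r δ : ℝ) :
    volume (ball x₀ r ∩ {x | |inner ℝ α x| < δ}) ≤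
      ENNReal.ofReal (2 * (δ / ‖α‖)) * ENNReal.ofReal (2 * r) ^ (finrank ℝ E - 1) := by
  classical
  have : Nontrivial E := nontrivial_of_ne α 0 hα
  obtain ⟨i₀⟩ : Nonempty (Fin (finrank ℝ E)) := Fin.pos_iff_nonempty.1 finrank_pos
  obtain ⟨b, hb⟩ := exists_orthonormalBasis_apply_eq (Fintype.card_fin _).symm i₀
    (norm_smul_inv_norm (𝕜 := ℝ) hα)
  let f : E → Fin (finrank ℝ E) → ℝ := fun x => WithLp.ofLp (b.repr x)
  have hf : MeasurePreserving f :=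
    (PiLp.volume_preserving_ofLp _).comp b.measurePreserving_repr
  have hf₀ (x : E) : f x i₀ = ‖α‖⁻¹ * inner ℝ α x := by
    simp [f, b.repr_apply_apply, hb, real_inner_smul_left]
  let lower := Function.update (f x₀ - fun _ => r) i₀ (-(δ / ‖α‖))
  let upper := Function.update (f x₀ + fun _ => r) i₀ (δ / ‖α‖)
  have hsub : ball x₀ r ∩ {x | |inner ℝ α x| < δ} ⊆ f ⁻¹' Icc lower upper := by
    rintro x ⟨hxr, hxδ⟩
    have hcoord (i : Fin (finrank ℝ E)) : |f x i - f x₀ i| < r := by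
      calc |f x i - f x₀ i| = ‖b.repr (x - x₀) i‖ := by simp [f, Real.norm_eq_abs]
        _ ≤ ‖b.repr (x - x₀)‖ := PiLp.norm_apply_le _ i
        _ < r := by rwa [b.repr.norm_map, ← dist_eq_norm]
    have hslab : |f x i₀| ≤ δ / ‖α‖ := by
      rw [hf₀, abs_mul, abs_inv, abs_norm, inv_mul_eq_div]
      exact div_le_div_of_nonneg_right hxδ.le (norm_nonneg α)
    refine ⟨fun i => ?_, fun i => ?_⟩ <;> rcases eq_or_ne i i₀ with rfl | hne
    · simpa [lower] using neg_le_of_abs_le hslab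
    · simp only [lower, Function.update_of_ne hne, Pi.sub_apply]
      linarith [abs_sub_lt_iff.1 (hcoord i)]
    · simpa [upper] using le_of_abs_le hslab
    · simp only [upper, Function.update_of_ne hne, Pi.add_apply]
      linarith [abs_sub_lt_iff.1 (hcoord i)]
  have hwidth : (fun i => ENNReal.ofReal (upper i - lower i)) =
      Function.update (fun _ => ENNReal.ofReal (2 * r)) i₀ (ENNReal.ofReal (2 * (δ / ‖α‖))) := by
    ext i
    rcases eq_or_ne i i₀ with rfl | hne
    · simp [lower, upper, two_mul]
    · simp [lower, upper, hne, two_mul]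
  calc volume (ball x₀ r ∩ {x | |inner ℝ α x| < δ})
      ≤ volume (f ⁻¹' Icc lower upper) := measure_mono hsub
    _ = volume (Icc lower upper) := hf.measure_preimage measurableSet_Icc.nullMeasurableSet
    _ = ENNReal.ofReal (2 * (δ / ‖α‖)) * ENNReal.ofReal (2 * r) ^ (finrank ℝ E - 1) := by
      rw [Real.volume_Icc_pi, hwidth, Finset.prod_update_of_mem (Finset.mem_univ i₀),
        Finset.prod_const, Finset.card_sdiff, Finset.card_univ, Fintype.card_fin]
      simp

end Slab

section DunklWeight

variable {E : Type*} [NormedAddCommGroup E] [InnerProductSpace ℝ E]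

noncomputable def dunklWeight (A : Finset E) (k : E → ℝ) (x : E) : ℝ :=
  ∏ α ∈ A, |inner ℝ α x| ^ (2 * k α)

def nearHyperplane (α x₀ : E) (r ε : ℝ) : Set E :=
  ball x₀ r ∩ {x | |inner ℝ α x| < ε * (|inner ℝ α x₀| + ‖α‖ * r)}

theorem isOpen_nearHyperplane (α x₀ : E) (r ε : ℝ) : IsOpen (nearHyperplane α x₀ r ε) :=
  isOpen_ball.inter <| isOpen_lt (continuous_const.inner continuous_id).abs continuous_const

theorem abs_inner_le_abs_inner_add_norm_mul_dist (α x y : E) :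
    |inner ℝ α x| ≤ |inner ℝ α y| + ‖α‖ * dist x y := by
  have h : |inner ℝ α x| - |inner ℝ α y| ≤ ‖α‖ * dist x y :=
    calc |inner ℝ α x| - |inner ℝ α y| ≤ |inner ℝ α x - inner ℝ α y| :=
          abs_sub_abs_le_abs_sub _ _
      _ = |inner ℝ α (x - y)| := by rw [inner_sub_right]
      _ ≤ ‖α‖ * dist x y := by rw [dist_eq_norm]; exact abs_real_inner_le_norm _ _
  linarith

theorem abs_inner_le_of_mem_ball_two_mul {α x₀ x : E} {r : ℝ} (hx : x ∈ ball x₀ (2 * r)) :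
    |inner ℝ α x| ≤ 2 * (|inner ℝ α x₀| + ‖α‖ * r) := by
  have := abs_inner_le_abs_inner_add_norm_mul_dist α x x₀
  have : ‖α‖ * dist x x₀ ≤ ‖α‖ * (2 * r) := by gcongr; exact (mem_ball.1 hx).le
  nlinarith [abs_nonneg (inner ℝ α x₀)]

theorem abs_inner_lt_of_mem_nearHyperplane {α x₀ x : E} {r ε : ℝ} (hε : ε ≤ 1 / 3)
    (hx : x ∈ nearHyperplane α x₀ r ε) : |inner ℝ α x| < 3 * ε * ‖α‖ * r := by
  obtain ⟨hxr, hxε : |inner ℝ α x| < ε * (|inner ℝ α x₀| + ‖α‖ * r)⟩ := hx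
  have hx₀ := abs_inner_le_abs_inner_add_norm_mul_dist α x₀ x
  have : ‖α‖ * dist x₀ x ≤ ‖α‖ * r := by gcongr; exact (mem_ball'.1 hxr).le
  have hs : 0 ≤ |inner ℝ α x₀| + ‖α‖ * r := by
    have : 0 ≤ r := dist_nonneg.trans (mem_ball'.1 hxr).le
    positivity
  have hε₀ : 0 < ε := pos_of_mul_pos_left ((abs_nonneg _).trans_lt hxε) hs
  have hs_lt : |inner ℝ α x₀| + ‖α‖ * r < 3 * ‖α‖ * r := by
    nlinarith [mul_nonneg (sub_nonneg.2 hε) hs]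
  calc |inner ℝ α x| < ε * (|inner ℝ α x₀| + ‖α‖ * r) := hxε
    _ ≤ ε * (3 * ‖α‖ * r) := by gcongr
    _ = 3 * ε * ‖α‖ * r := by ring

theorem dunklWeight_le_of_mem_ball_two_mul {A : Finset E} {k : E → ℝ} (hk : ∀ α ∈ A, 0 ≤ k α)
    {x₀ x : E} {r : ℝ} (hx : x ∈ ball x₀ (2 * r)) :
    dunklWeight A k x ≤ ∏ α ∈ A, (2 * (|inner ℝ α x₀| + ‖α‖ * r)) ^ (2 * k α) :=
  Finset.prod_le_prod (fun _ _ => by positivity) fun α hα =>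
    Real.rpow_le_rpow (abs_nonneg _) (abs_inner_le_of_mem_ball_two_mul hx) (by linarith [hk α hα])

theorem prod_le_dunklWeight_of_mem_diff {A : Finset E} {k : E → ℝ} (hk : ∀ α ∈ A, 0 ≤ k α)
    {x₀ x : E} {r ε : ℝ} (hε : 0 ≤ ε) (hx : x ∈ ball x₀ r \ ⋃ α ∈ A, nearHyperplane α x₀ r ε) :
    ∏ α ∈ A, (ε * (|inner ℝ α x₀| + ‖α‖ * r)) ^ (2 * k α) ≤ dunklWeight A k x := by
  have hr : 0 ≤ r := dist_nonneg.trans (mem_ball.1 hx.1).le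
  refine Finset.prod_le_prod (fun _ _ => by positivity) fun α hα => ?_
  refine Real.rpow_le_rpow (by positivity) (not_lt.1 fun h => hx.2 ?_) (by linarith [hk α hα])
  exact mem_biUnion hα ⟨hx.1, h⟩

variable [FiniteDimensional ℝ E] [MeasurableSpace E] [BorelSpace E]

theorem volume_nearHyperplane_le {α : E} (hα : α ≠ 0) (x₀ : E) {r ε : ℝ} (hr : 0 < r)
    (hε : ε ≤ 1 / 3) :
    volume (nearHyperplane α x₀ r ε) ≤ ENNReal.ofReal (3 * ε * (2 * r) ^ finrank ℝ E) := by
  have : Nontrivial E := nontrivial_of_ne α 0 hα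
  obtain ⟨n, hn⟩ := Nat.exists_eq_add_one.2 (finrank_pos (R := ℝ) (M := E))
  have hnα : 0 < ‖α‖ := norm_pos_iff.2 hα
  calc volume (nearHyperplane α x₀ r ε)
      ≤ volume (ball x₀ r ∩ {x | |inner ℝ α x| < 3 * ε * ‖α‖ * r}) :=
        measure_mono fun x hx => ⟨hx.1, abs_inner_lt_of_mem_nearHyperplane hε hx⟩
    _ ≤ ENNReal.ofReal (2 * (3 * ε * ‖α‖ * r / ‖α‖)) * ENNReal.ofReal (2 * r) ^ n := by
        simpa only [hn, Nat.add_sub_cancel] using volume_ball_inter_abs_inner_lt_le hα x₀ r _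
    _ = ENNReal.ofReal (3 * ε * (2 * r) ^ finrank ℝ E) := by
        rw [← ENNReal.ofReal_pow (by positivity), ← ENNReal.ofReal_mul' (by positivity), hn,
          pow_succ]
        congr 1
        field_simp

theorem exists_pos_forall_two_mul_volume_biUnion_nearHyperplane_le {A : Finset E}
    (hA : ∀ α ∈ A, α ≠ 0) :
    ∃ ε, 0 < ε ∧ ∀ (x₀ : E) (r : ℝ), 0 < r →
      2 * volume (⋃ α ∈ A, nearHyperplane α x₀ r ε) ≤ volume (ball x₀ r) := by
  set d := finrank ℝ E
  set v := (volume (ball (0 : E) 1)).toReal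
  have hv : 0 < v := ENNReal.toReal_pos (measure_ball_pos _ _ one_pos).ne' measure_ball_lt_top.ne
  set c : ℝ := 6 * 2 ^ d * A.card
  have hc : 0 ≤ c := by positivity
  set ε := min (1 / 3) (v / (c + 1))
  have hε : 0 < ε := lt_min (by norm_num) (by positivity)
  have hcε : c * ε ≤ v :=
    calc c * ε ≤ (c + 1) * (v / (c + 1)) :=
          mul_le_mul (by linarith) (min_le_right _ _) hε.le (by positivity)
      _ = v := mul_div_cancel₀ _ (by positivity)
  refine ⟨ε, hε, fun x₀ r hr => ?_⟩
  calc 2 * volume (⋃ α ∈ A, nearHyperplane α x₀ r ε)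
      ≤ 2 * ∑ α ∈ A, volume (nearHyperplane α x₀ r ε) := by
        gcongr; exact measure_biUnion_finset_le _ _
    _ ≤ 2 * ∑ _α ∈ A, ENNReal.ofReal (3 * ε * (2 * r) ^ d) := by
        gcongr with α hα; exact volume_nearHyperplane_le (hA α hα) x₀ hr (min_le_left _ _)
    _ = ENNReal.ofReal (c * ε * r ^ d) := by
        rw [Finset.sum_const, nsmul_eq_mul, ← ENNReal.ofReal_natCast, ← ENNReal.ofReal_ofNat 2,
          ← ENNReal.ofReal_mul (by positivity), ← ENNReal.ofReal_mul (by positivity)]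
        congr 1
        simp only [c]; ring
    _ ≤ ENNReal.ofReal (v * r ^ d) := by gcongr
    _ = volume (ball x₀ r) := by
        rw [Measure.addHaar_ball_of_pos _ _ hr, mul_comm, ENNReal.ofReal_mul (by positivity),
          ENNReal.ofReal_toReal measure_ball_lt_top.ne]

theorem withDensity_dunklWeight_ball_two_mul_le {A : Finset E} {k : E → ℝ}
    (hk : ∀ α ∈ A, 0 ≤ k α) {x₀ : E} {r ε : ℝ} (hε : 0 < ε)
    (hsmall : 2 * volume (⋃ α ∈ A, nearHyperplane α x₀ r ε) ≤ volume (ball x₀ r)) :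
    (volume.withDensity fun x => ENNReal.ofReal (dunklWeight A k x)) (ball x₀ (2 * r)) ≤
      2 ^ (finrank ℝ E + 1) * ENNReal.ofReal (∏ α ∈ A, (2 / ε) ^ (2 * k α)) *
        (volume.withDensity fun x => ENNReal.ofReal (dunklWeight A k x)) (ball x₀ r) := by
  have hG : MeasurableSet (ball x₀ r \ ⋃ α ∈ A, nearHyperplane α x₀ r ε) :=
    measurableSet_ball.diff <|
      Finset.measurableSet_biUnion A fun α _ => (isOpen_nearHyperplane α x₀ r ε).measurableSet
  refine withDensity_ball_two_mul_le_of_le_of_le volume _ hG sdiff_subset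
    (measure_le_two_mul_measure_diff measure_ball_lt_top.ne hsmall) (fun x hx => ?_)
    fun x hx => ENNReal.ofReal_le_ofReal (prod_le_dunklWeight_of_mem_diff hk hε.le hx)
  rw [← ENNReal.ofReal_mul (by positivity), ← Finset.prod_mul_distrib]
  refine ENNReal.ofReal_le_ofReal ((dunklWeight_le_of_mem_ball_two_mul hk hx).trans_eq ?_)
  have hr : 0 ≤ r := by linarith [dist_nonneg.trans_lt (mem_ball.1 hx)]
  refine Finset.prod_congr rfl fun α _ => ?_
  rw [← Real.mul_rpow (by positivity) (by positivity), ← mul_assoc, div_mul_cancel₀ _ hε.ne']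

end DunklWeight

/-- The measure `dμ = ∏_{α∈A} |⟨α,x⟩|^{2k(α)} dx` on `ℝ^d`, where `A`
is a finite set of nonzero vectors and `k ≥ 0`, is a doubling measure. -/
theorem dunkl_weight_measure_is_doubling (d : ℕ)
    (A : Finset (EuclideanSpace ℝ (Fin d))) (hA : ∀ α ∈ A, α ≠ 0)
    (k : EuclideanSpace ℝ (Fin d) → ℝ) (hk : ∀ α ∈ A, 0 ≤ k α) :
    ∃ C : ℝ, 0 < C ∧ ∀ (x₀ : EuclideanSpace ℝ (Fin d)) (r : ℝ), 0 < r →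
      (volume.withDensity fun x =>
          ENNReal.ofReal (∏ α ∈ A, |(inner ℝ α x : ℝ)| ^ (2 * k α))) (ball x₀ (2 * r))
        ≤ ENNReal.ofReal C *
          (volume.withDensity fun x =>
            ENNReal.ofReal (∏ α ∈ A, |(inner ℝ α x : ℝ)| ^ (2 * k α))) (ball x₀ r) := by
  obtain ⟨ε, hε, hsmall⟩ := exists_pos_forall_two_mul_volume_biUnion_nearHyperplane_le hA
  refine ⟨2 ^ (d + 1) * ∏ α ∈ A, (2 / ε) ^ (2 * k α), by positivity, fun x₀ r hr => ?_⟩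
  have h := withDensity_dunklWeight_ball_two_mul_le hk hε (hsmall x₀ r hr)
  rw [finrank_euclideanSpace_fin] at h
  rwa [ENNReal.ofReal_mul (by positivity), ENNReal.ofReal_pow zero_le_two, ENNReal.ofReal_ofNat]
end
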